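/- arXiv:2108.04963 — 3 statements merged into one kernel-verified Lean document; each statement's English description precedes it below -/
import Mathlib

section
/- For every n ≥ 0, viewing F_{n+1}(q) and F_n(q) as formal power series in q (each with constant term 1, hence invertible), the ratio F_{n+1}(q)/F_n(q) agrees with the power series G(q) satisfying G(q)^2 - G(q) - q = 0 with G(0) = 1, up to order q^{n+1}; that is, F_{n+1}(q)/F_n(q) - G(q) ∈ q^{n+1}·ℚ[[q]]. -/
/-! If `G² = G + q`, the recurrence gives `F_{n+2} - G F_{n+1} = (1 - G)(F_{n+1} - G F_n)`, so
`F_{n+1} - G F_n = (1 - G)^{n+1}`. Since `G(0) = 1`, `q ∣ 1 - G`, hence `q^{n+1} ∣ F_{n+1} - G F_n`,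
and dividing by the unit `F_n` gives the claim. -/

open PowerSeries

noncomputable def qFibS : ℕ → PowerSeries ℚ
  | 0 => 1
  | 1 => 1
  | n + 2 => qFibS (n + 1) + PowerSeries.X * qFibS n

lemma constantCoeff_qFibS : ∀ n, constantCoeff (qFibS n) = 1
  | 0 => by simp [qFibS]
  | 1 => by simp [qFibS]
  | n + 2 => by simp [qFibS, constantCoeff_qFibS (n + 1)]

lemma qFibS_succ_sub_mul_qFibS {G : PowerSeries ℚ} (hG : G ^ 2 - G - X = 0) (n : ℕ) :
    qFibS (n + 1) - G * qFibS n = (1 - G) ^ (n + 1) := by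
  induction n with
  | zero => simp [qFibS]
  | succ n ih =>
    calc qFibS (n + 2) - G * qFibS (n + 1)
        = (1 - G) * (qFibS (n + 1) - G * qFibS n) - (G ^ 2 - G - X) * qFibS n := by
          rw [qFibS]; ring
      _ = (1 - G) ^ (n + 2) := by rw [ih, hG]; ring

lemma X_dvd_one_sub_of_constantCoeff_eq_one {R : Type*} [CommRing R] {G : PowerSeries R}
    (hG0 : constantCoeff G = 1) : X ∣ 1 - G := by
  simp [X_dvd_iff, hG0]

theorem qFib_ratio_golden (G : PowerSeries ℚ)
    (hG0 : PowerSeries.constantCoeff G = 1)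
    (hG : G ^ 2 - G - PowerSeries.X = 0) (n : ℕ) :
    (PowerSeries.X : PowerSeries ℚ) ^ (n + 1) ∣ qFibS (n + 1) * (qFibS n)⁻¹ - G := by
  have hinv : qFibS n * (qFibS n)⁻¹ = 1 :=
    PowerSeries.mul_inv_cancel _ (by simp [constantCoeff_qFibS])
  have hratio : qFibS (n + 1) * (qFibS n)⁻¹ - G = (1 - G) ^ (n + 1) * (qFibS n)⁻¹ := by
    rw [← qFibS_succ_sub_mul_qFibS hG, sub_mul, mul_assoc, hinv, mul_one]
  rw [hratio]
  exact dvd_mul_of_dvd_left (pow_dvd_pow_of_dvd (X_dvd_one_sub_of_constantCoeff_eq_one hG0) _) _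
end

section
/- For positive integers m ≤ n, the sum over all tuples (m_1, ..., m_t) of positive integers (of any length t ≥ 1) with m_1 + ... + m_t = m of (-1)^t · C(n - m_1, m_1 - 1) · C(n - m_2, m_2) ⋯ C(n - m_t, m_t) equals (-1)^m · C_{m-1}, where C_{m-1} is the (m-1)-st Catalan number. -/
/-- The weight of a composition `l = (m₁, …, m_t)` of `m`: `(-1)^t` times
`C(n - m₁, m₁ - 1)` for the first part and `C(n - mᵢ, mᵢ)` for the rest. -/
def compWeight (n : ℕ) (l : List ℕ) : ℤ :=
  (-1) ^ l.length * ((n - l.headI).choose (l.headI - 1) : ℤ) *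
    (l.tail.map fun mi => ((n - mi).choose mi : ℤ)).prod

/-!
Write `aᵢ = C(n - i, i)` and `A = ∑ aᵢ xⁱ`. Splitting off the first block `k + 1`, the sum
becomes `-∑_{k + l = m - 1} C(n - 1 - k, k) sₗ`, where `sₗ = ∑ (-1)^t ∏ a_{mᵢ}` over the
compositions of `l` are the coefficients of `A⁻¹`. The identity
`C(N, M) = ∑_{j + i = M} (-1)^j C_j C(N + j + 1, i)`, which follows from the Catalan recursion by
induction on `M`, says that for `k < n` the number `C(n - 1 - k, k)` is the `k`-th coefficient of
`A · ∑ (-1)^j C_j x^j`. Since every `k` that occurs is below `m ≤ n`, the sum is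
`-[x^{m-1}] (A · A⁻¹ · ∑ (-1)^j C_j x^j) = (-1)^m C_{m-1}`.
-/

open Finset PowerSeries

theorem Finset.Nat.sum_antidiagonal_sum_antidiagonal_fst {M : Type*} [AddCommMonoid M] (n : ℕ)
    (f : ℕ → ℕ → ℕ → M) :
    ∑ p ∈ antidiagonal n, ∑ q ∈ antidiagonal p.1, f q.1 q.2 p.2 =
      ∑ p ∈ antidiagonal n, ∑ q ∈ antidiagonal p.2, f p.1 q.1 q.2 := by
  simp only [Finset.sum_sigma']
  apply Finset.sum_nbij' (fun ⟨⟨_, c⟩, ⟨a, b⟩⟩ ↦ ⟨(a, b + c), (b, c)⟩)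
    (fun ⟨⟨a, _⟩, ⟨b, c⟩⟩ ↦ ⟨(a + b, c), (a, b)⟩) <;> aesop (add simp [add_assoc])

theorem sum_antidiagonal_catalan_mul_choose (M N : ℕ) :
    ∑ p ∈ antidiagonal M, (-1 : ℤ) ^ p.1 * catalan p.1 * (N + p.1 + 1).choose p.2 = N.choose M := by
  induction M using Nat.strong_induction_on generalizing N with
  | _ M ih =>
  rcases M with _ | M
  · simp
  have catalan_succ_expand : ∀ a b,
      (-1 : ℤ) ^ (a + 1) * catalan (a + 1) * (N + (a + 1) + 1).choose b =
        -∑ q ∈ antidiagonal a, (-1 : ℤ) ^ q.1 * catalan q.1 *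
          ((-1) ^ q.2 * catalan q.2 * (N + q.1 + 1 + q.2 + 1).choose b) := by
    intro a b
    rw [catalan_succ', Nat.cast_sum, mul_sum, sum_mul, ← sum_neg_distrib]
    refine sum_congr rfl fun q hq ↦ ?_
    rw [← mem_antidiagonal.1 hq]
    push_cast
    ring_nf
  calc ∑ p ∈ antidiagonal (M + 1), (-1 : ℤ) ^ p.1 * catalan p.1 * (N + p.1 + 1).choose p.2
      = ((N + 1).choose (M + 1) : ℤ) - ∑ p ∈ antidiagonal M, (-1 : ℤ) ^ p.1 * catalan p.1 *
          ∑ q ∈ antidiagonal p.2,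
            (-1 : ℤ) ^ q.1 * catalan q.1 * (N + p.1 + 1 + q.1 + 1).choose q.2 := by
        rw [Nat.sum_antidiagonal_succ]
        simp only [catalan_succ_expand, sum_neg_distrib, mul_sum]
        rw [Nat.sum_antidiagonal_sum_antidiagonal_fst M (fun a b c ↦ (-1 : ℤ) ^ a * catalan a *
          ((-1) ^ b * catalan b * (N + a + 1 + b + 1).choose c))]
        simp [sub_eq_add_neg, mul_assoc]
    _ = ((N + 1).choose (M + 1) : ℤ) - N.choose M := by
        rw [← ih M (by omega) N]
        refine congrArg _ (sum_congr rfl fun p hp ↦ ?_)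
        rw [ih p.2 (Nat.antidiagonal.snd_lt hp)]
    _ = N.choose (M + 1) := by
        rw [Nat.choose_succ_succ', Nat.cast_add]
        ring

namespace Composition

theorem sum_zero {M : Type*} [AddCommMonoid M] (f : List ℕ → M) :
    ∑ c : Composition 0, f c.blocks = f [] := by
  simp [fun c : Composition 0 ↦ c.blocks_eq_nil.2 rfl, composition_card]

lemma blocks_eq_cons {m : ℕ} (c : Composition (m + 1)) :
    c.blocks = c.blocks.headI :: c.blocks.tail := by
  cases h : c.blocks with
  | nil => exact absurd h (by simp [blocks_eq_nil])
  | cons k d => rfl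

def consEquiv (m : ℕ) : (Σ k : Fin (m + 1), Composition (m - k)) ≃ Composition (m + 1) where
  toFun p :=
    ⟨(p.1 + 1) :: p.2.blocks,
      by rintro i (_ | ⟨_, hi⟩) <;> [omega; exact p.2.blocks_pos hi],
      by simp only [List.sum_cons, p.2.blocks_sum]; omega⟩
  invFun c :=
    have hpos := c.blocks_pos (c.blocks_eq_cons ▸ List.mem_cons_self)
    have hsum := c.blocks_eq_cons ▸ c.blocks_sum
    ⟨⟨c.blocks.headI - 1, by simp only [List.sum_cons] at hsum; omega⟩,
      ⟨c.blocks.tail, fun hi ↦ c.blocks_pos (c.blocks_eq_cons ▸ List.mem_cons_of_mem _ hi),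
        show _ = m - (c.blocks.headI - 1) by simp only [List.sum_cons] at hsum; omega⟩⟩
  left_inv _ := rfl
  right_inv c := by
    have hpos := c.blocks_pos (c.blocks_eq_cons ▸ List.mem_cons_self)
    ext1
    conv_rhs => rw [c.blocks_eq_cons]
    simp only
    congr 1
    omega

theorem sum_succ {M : Type*} [AddCommMonoid M] (m : ℕ) (f : List ℕ → M) :
    ∑ c : Composition (m + 1), f c.blocks =
      ∑ p ∈ antidiagonal m, ∑ d : Composition p.2, f ((p.1 + 1) :: d.blocks) := by
  rw [← (consEquiv m).sum_comp, Fintype.sum_sigma, Nat.sum_antidiagonal_eq_sum_range_succ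
    (fun k l ↦ ∑ d : Composition l, f ((k + 1) :: d.blocks)), ← Fin.sum_univ_eq_sum_range]
  rfl

end Composition

section SignedCompositionSum

variable {R : Type*} [CommRing R]

def signedCompositionSum (a : ℕ → R) (m : ℕ) : R :=
  ∑ c : Composition m, (-1) ^ c.length * (c.blocks.map a).prod

theorem signedCompositionSum_zero (a : ℕ → R) : signedCompositionSum a 0 = 1 := by
  simp only [signedCompositionSum, ← Composition.blocks_length]
  rw [Composition.sum_zero (fun l ↦ (-1 : R) ^ l.length * (l.map a).prod)]
  simp

theorem signedCompositionSum_succ (a : ℕ → R) (m : ℕ) :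
    signedCompositionSum a (m + 1) =
      -∑ p ∈ antidiagonal m, a (p.1 + 1) * signedCompositionSum a p.2 := by
  simp only [signedCompositionSum, ← Composition.blocks_length]
  rw [Composition.sum_succ m (fun l ↦ (-1 : R) ^ l.length * (l.map a).prod), ← sum_neg_distrib]
  refine sum_congr rfl fun p _ ↦ ?_
  rw [mul_sum, ← sum_neg_distrib]
  refine sum_congr rfl fun d _ ↦ ?_
  simp only [List.length_cons, List.map_cons, List.prod_cons, pow_succ]
  ring

theorem mk_mul_mk_signedCompositionSum {a : ℕ → R} (ha : a 0 = 1) :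
    mk a * mk (signedCompositionSum a) = 1 := by
  ext (_ | m)
  · simp [ha, signedCompositionSum_zero]
  · rw [coeff_mul, Nat.sum_antidiagonal_succ]
    simp [ha, signedCompositionSum_succ]

end SignedCompositionSum

theorem coeff_mk_catalan_mul_mk_choose {n k : ℕ} (hk : k < n) :
    coeff k (mk (fun j ↦ (-1 : ℤ) ^ j * catalan j) * mk (fun i ↦ ((n - i).choose i : ℤ))) =
      (n - (k + 1)).choose k := by
  rw [coeff_mul, ← sum_antidiagonal_catalan_mul_choose k (n - (k + 1))]
  refine sum_congr rfl fun p hp ↦ ?_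
  have hp := mem_antidiagonal.1 hp
  rw [coeff_mk, coeff_mk, show n - p.2 = n - (k + 1) + p.1 + 1 by omega]

theorem sum_compWeight_succ (n m : ℕ) :
    ∑ c : Composition (m + 1), compWeight n c.blocks =
      -∑ p ∈ antidiagonal m, ((n - (p.1 + 1)).choose p.1 : ℤ) *
        signedCompositionSum (fun i ↦ ((n - i).choose i : ℤ)) p.2 := by
  rw [Composition.sum_succ, ← sum_neg_distrib]
  refine sum_congr rfl fun p _ ↦ ?_
  rw [signedCompositionSum, mul_sum, ← sum_neg_distrib]
  refine sum_congr rfl fun d _ ↦ ?_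
  simp only [compWeight, List.length_cons, List.headI_cons, List.tail_cons, Nat.add_sub_cancel,
    Composition.blocks_length, pow_succ]
  ring

theorem sauermann_wigderson (m n : ℕ) (hm : 1 ≤ m) (hmn : m ≤ n) :
    ∑ c : Composition m, compWeight n c.blocks = (-1) ^ m * catalan (m - 1) := by
  obtain ⟨m, rfl⟩ : ∃ k, m = k + 1 := ⟨m - 1, by omega⟩
  set a : ℕ → ℤ := fun i ↦ (n - i).choose i
  set signedCatalan : PowerSeries ℤ := mk fun j ↦ (-1) ^ j * catalan j
  calc ∑ c : Composition (m + 1), compWeight n c.blocks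
      = -∑ p ∈ antidiagonal m,
          coeff p.1 (signedCatalan * mk a) * coeff p.2 (mk (signedCompositionSum a)) := by
        rw [sum_compWeight_succ]
        refine congrArg _ (sum_congr rfl fun p hp ↦ ?_)
        have hk := Nat.antidiagonal.fst_lt hp
        rw [coeff_mk_catalan_mul_mk_choose (by omega), coeff_mk]
    _ = -coeff m (signedCatalan * (mk a * mk (signedCompositionSum a))) := by
        rw [← mul_assoc, coeff_mul]
    _ = (-1 : ℤ) ^ (m + 1) * catalan (m + 1 - 1) := by
        rw [mk_mul_mk_signedCompositionSum (by simp [a]), mul_one, coeff_mk, pow_succ]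
        simp
end

section
/- In ℚ[[q]], the q-Fibonacci power series satisfy the identity F_{n+1}(q)·F_{n-1}(q) - F_n(q)^2 = (-1)^{n+1} q^n for all n ≥ 1 (q-analogue of Cassini's identity). -/
open PowerSeries

theorem qFib_cassini (n : ℕ) (hn : 1 ≤ n) :
    qFibS (n + 1) * qFibS (n - 1) - qFibS n ^ 2 =
      (-1) ^ (n + 1) * (PowerSeries.X : PowerSeries ℚ) ^ n := by
  induction n, hn using Nat.le_induction with
  | base => simp [qFibS]
  | succ m hm ih =>
    obtain ⟨k, rfl⟩ := Nat.exists_eq_add_of_le hm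
    rw [Nat.add_comm 1 k] at *
    have h1 : qFibS (k + 1 + 1 + 1) = qFibS (k + 1 + 1) + X * qFibS (k + 1) :=
      by rw [show k + 1 + 1 + 1 = k + 1 + 2 from rfl, qFibS]
    have h2 : qFibS (k + 1 + 1) = qFibS (k + 1) + X * qFibS (k + 1 - 1) := by
      cases k with
      | zero => simp [qFibS]
      | succ j => rw [show j + 1 + 1 + 1 = j + 1 + 2 from rfl, qFibS]; rfl
    rw [h1, show k + 1 + 1 - 1 = k + 1 from rfl]
    have key : (qFibS (k + 1 + 1) + X * qFibS (k + 1)) * qFibS (k + 1) -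
        qFibS (k + 1 + 1) ^ 2 =
        -X * (qFibS (k + 1 + 1) * qFibS (k + 1 - 1) - qFibS (k + 1) ^ 2) := by
      rw [h2]; ring
    rw [key, ih]
    ring
end
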